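/- Let G be a group, d ∈ ℕ, and let G_• = {G₁, …, G_{d+1}} be a d-step filtration of G: G₁ = G ⊇ G₂ ⊇ … ⊇ G_{d+1} = {1}, each G_i is a normal subgroup of G, and ⁅G_i, G_j⁆ ⊆ G_{i+j} whenever i, j ∈ {1,…,d} and i + j ≤ d + 1. Let L be a normal subgroup of G with L ⊆ G₂. Define L_i := L ∩ G_{i+1} for i = 1, …, d and L_{d+1} := {1}, and set H_i := G_i ×_{L_i} G_i := {(a,b) ∈ G_i × G_i : ab⁻¹ ∈ L_i}. Then H_• = {H₁, …, H_{d+1}} is a d-step filtration of the group G ×_L G := {(a,b) ∈ G × G : ab⁻¹ ∈ L}: H₁ = G ×_L G, H_{d+1} = {1}, H₁ ⊇ H₂ ⊇ … ⊇ H_{d+1}, each H_i is a normal subgroup of G ×_L G, and ⁅H_i, H_j⁆ ⊆ H_{i+j} whenever i, j ∈ {1,…,d} and i + j ≤ d + 1. (Lemma 4.2 of the paper, group-theoretic form.) -/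

import Mathlib

/-- The relatively independent self-product `G ×_L G` of a group `G` over a normal
subgroup `L`, i.e. the subgroup `{(a₁, a₂) ∈ G × G : a₁ * a₂⁻¹ ∈ L}` of `G × G`. -/
def relProd {G : Type*} [Group G] (L : Subgroup G) [hN : L.Normal] : Subgroup (G × G) where
  carrier := {p : G × G | p.1 * p.2⁻¹ ∈ L}
  one_mem' := by simpa using L.one_mem
  mul_mem' := by
    rintro ⟨a₁, a₂⟩ ⟨b₁, b₂⟩ ha hb
    have h : (a₁ * b₁) * (a₂ * b₂)⁻¹ = (a₁ * (b₁ * b₂⁻¹) * a₁⁻¹) * (a₁ * a₂⁻¹) := by group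
    simp only [Set.mem_setOf_eq] at ha hb
    show a₁ * b₁ * (a₂ * b₂)⁻¹ ∈ L
    rw [h]
    exact mul_mem (hN.conj_mem _ hb a₁) ha
  inv_mem' := by
    rintro ⟨a₁, a₂⟩ ha
    simp only [Set.mem_setOf_eq] at ha
    have h : a₁⁻¹ * (a₂⁻¹)⁻¹ = a₁⁻¹ * (a₁ * a₂⁻¹)⁻¹ * (a₁⁻¹)⁻¹ := by group
    show a₁⁻¹ * (a₂⁻¹)⁻¹ ∈ L
    rw [h]
    exact hN.conj_mem _ (L.inv_mem ha) a₁⁻¹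

theorem mem_relProd {G : Type*} [Group G] {L : Subgroup G} [L.Normal] {p : G × G} :
    p ∈ relProd L ↔ p.1 * p.2⁻¹ ∈ L := Iff.rfl

/-!
Write the elements of `H_i` as `(u * g, g)` with `g ∈ G_i` and `u ∈ L_i = L ∩ G_{i+1}`. Modulo the
normal subgroup `L ∩ G_{i+j+1}`, the factor `u ∈ L_i` commutes with `G_j`, the factor `v ∈ L_j`
commutes with `G_i`, and `u * v ∈ L ∩ G_1` commutes with `G_{i+j}`; hence
`⁅u * g, v * k⁆ ≡ ⁅g, k⁆`, which puts `⁅H_i, H_j⁆` inside `H_{i+j}`.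

Extending the truncated filtration `G_1 ⊇ ⋯ ⊇ G_{d+1}` to all of `ℕ`, constantly `G_1` below `1`
and `G_{d+1}` above `d + 1`, removes the index restrictions from all the axioms.
-/

open Subgroup
open scoped commutatorElement

section Commutator

variable {G : Type*} [Group G]

theorem Prod.mk_commutatorElement_mk {H : Type*} [Group H] (a c : G) (b d : H) :
    ⁅(a, b), (c, d)⁆ = (⁅a, c⁆, ⁅b, d⁆) := rfl

theorem commutatorElement_mem_of_mem_left {N : Subgroup G} [N.Normal] {x : G} (hx : x ∈ N)
    (y : G) : ⁅x, y⁆ ∈ N :=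
  commutator_le_left N ⊤ (commutator_mem_commutator hx (mem_top y))

theorem commutatorElement_mem_of_mem_right {N : Subgroup G} [N.Normal] (x : G) {y : G}
    (hy : y ∈ N) : ⁅x, y⁆ ∈ N :=
  commutator_le_right ⊤ N (commutator_mem_commutator (mem_top x) hy)

theorem commutatorElement_mul_mul_mul_inv (u g v k : G) :
    ⁅u * g, v * k⁆ * ⁅g, k⁆⁻¹ =
      u * ⁅g, v⁆ * u⁻¹ * ⁅u * v, ⁅g, k⁆⁆ * (⁅g, k⁆ * ⁅u, v * k⁆ * ⁅g, k⁆⁻¹) := by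
  simp only [commutatorElement_def]
  group

theorem mul_conj_mul_inv_eq_conj_mul_commutatorElement (t g u y : G) :
    t * g * (u * y) * (t * g)⁻¹ * (g * y * g⁻¹)⁻¹ = t * g * u * (t * g)⁻¹ * ⁅t, g * y * g⁻¹⁆ := by
  simp only [commutatorElement_def]
  group

theorem exists_mul_mk_eq_of_mem_relProd {N : Subgroup G} [N.Normal] {p : G × G}
    (hp : p ∈ relProd N) : ∃ t ∈ N, ∃ g, (t * g, g) = p :=
  ⟨p.1 * p.2⁻¹, hp, p.2, by simp⟩

end Commutator

structure IsCommutatorFiltration {G : Type*} [Group G] (F : ℕ → Subgroup G) : Prop where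
  antitone : Antitone F
  commutator_le : ∀ i j, ⁅F i, F j⁆ ≤ F (i + j)

namespace IsCommutatorFiltration

variable {G : Type*} [Group G] {F : ℕ → Subgroup G}

theorem commutatorElement_mem (hF : IsCommutatorFiltration F) {i j n : ℕ} {x y : G}
    (hx : x ∈ F i) (hy : y ∈ F j) (hn : n ≤ i + j) : ⁅x, y⁆ ∈ F n :=
  hF.antitone hn (hF.commutator_le i j (commutator_mem_commutator hx hy))

variable {L : Subgroup G} [L.Normal]

theorem commutatorElement_mem_inf_left (hF : IsCommutatorFiltration F) {i j n : ℕ} {x y : G}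
    (hx : x ∈ L ⊓ F i) (hy : y ∈ F j) (hn : n ≤ i + j) : ⁅x, y⁆ ∈ L ⊓ F n :=
  ⟨commutatorElement_mem_of_mem_left hx.1 y, hF.commutatorElement_mem hx.2 hy hn⟩

theorem commutatorElement_mem_inf_right (hF : IsCommutatorFiltration F) {i j n : ℕ} {x y : G}
    (hx : x ∈ F i) (hy : y ∈ L ⊓ F j) (hn : n ≤ i + j) : ⁅x, y⁆ ∈ L ⊓ F n :=
  ⟨commutatorElement_mem_of_mem_right x hy.1, hF.commutatorElement_mem hx hy.2 hn⟩

end IsCommutatorFiltration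

section RelProdFiltration

variable {G : Type*} [Group G]

/-- `H_i = G_i ×_{L_i} G_i` with `L_i = L ⊓ F (i + 1)`. -/
def relProdFiltration (F : ℕ → Subgroup G) [∀ i, (F i).Normal] (L : Subgroup G) [L.Normal]
    (i : ℕ) : Subgroup (G × G) :=
  (F i).prod (F i) ⊓ relProd (L ⊓ F (i + 1))

variable {F : ℕ → Subgroup G} [∀ i, (F i).Normal] {L : Subgroup G} [L.Normal]

theorem mem_relProdFiltration {i : ℕ} {p : G × G} :
    p ∈ relProdFiltration F L i ↔ p.1 ∈ F i ∧ p.2 ∈ F i ∧ p.1 * p.2⁻¹ ∈ L ⊓ F (i + 1) := by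
  simp only [relProdFiltration, mem_inf, mem_prod, mem_relProd, and_assoc]

theorem relProdFiltration_one (h1 : F 1 = ⊤) (hL : L ≤ F 2) :
    relProdFiltration F L 1 = relProd L := by
  ext p
  simp only [mem_relProdFiltration, mem_relProd, h1, mem_top, true_and, mem_inf,
    and_iff_left_iff_imp]
  exact fun hp => hL hp

theorem relProdFiltration_eq_bot {i : ℕ} (h : F i = ⊥) : relProdFiltration F L i = ⊥ := by
  simp [relProdFiltration, h, bot_prod_bot]

theorem exists_mul_mk_eq_of_mem_relProdFiltration {i : ℕ} {p : G × G}
    (hp : p ∈ relProdFiltration F L i) : ∃ u ∈ L ⊓ F (i + 1), ∃ g ∈ F i, (u * g, g) = p := by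
  obtain ⟨-, hg, hu⟩ := mem_relProdFiltration.1 hp
  exact ⟨_, hu, _, hg, by simp⟩

namespace IsCommutatorFiltration

theorem mk_mem_relProdFiltration (hF : IsCommutatorFiltration F) {i : ℕ} {x y : G}
    (hy : y ∈ F i) (hxy : x * y⁻¹ ∈ L ⊓ F (i + 1)) : (x, y) ∈ relProdFiltration F L i :=
  mem_relProdFiltration.2 ⟨by simpa using mul_mem (hF.antitone i.le_succ hxy.2) hy, hy, hxy⟩

theorem relProdFiltration_antitone (hF : IsCommutatorFiltration F) :
    Antitone (relProdFiltration F L) := by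
  intro i j hij p hp
  obtain ⟨h1, h2, h12⟩ := mem_relProdFiltration.1 hp
  exact mem_relProdFiltration.2 ⟨hF.antitone hij h1, hF.antitone hij h2,
    inf_le_inf_left L (hF.antitone (by omega)) h12⟩

theorem conj_mem_relProdFiltration (hF : IsCommutatorFiltration F) (hL : L ≤ F 1) {i : ℕ}
    {g h : G × G} (hg : g ∈ relProd L) (hh : h ∈ relProdFiltration F L i) :
    g * h * g⁻¹ ∈ relProdFiltration F L i := by
  obtain ⟨t, ht, g, rfl⟩ := exists_mul_mk_eq_of_mem_relProd hg
  obtain ⟨u, hu, y, hy, rfl⟩ := exists_mul_mk_eq_of_mem_relProdFiltration hh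
  have hy' : g * y * g⁻¹ ∈ F i := Normal.conj_mem inferInstance y hy g
  simp only [Prod.mk_mul_mk, Prod.inv_mk]
  refine hF.mk_mem_relProdFiltration hy' ?_
  rw [mul_conj_mul_inv_eq_conj_mul_commutatorElement]
  exact mul_mem (Normal.conj_mem inferInstance u hu _)
    (hF.commutatorElement_mem_inf_left ⟨ht, hL ht⟩ hy' (by omega))

theorem relProdFiltration_commutator_le (hF : IsCommutatorFiltration F) (i j : ℕ) :
    ⁅relProdFiltration F L i, relProdFiltration F L j⁆ ≤ relProdFiltration F L (i + j) := by
  rw [Subgroup.commutator_le]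
  intro p hp q hq
  obtain ⟨u, hu, g, hg, rfl⟩ := exists_mul_mk_eq_of_mem_relProdFiltration hp
  obtain ⟨v, hv, k, hk, rfl⟩ := exists_mul_mk_eq_of_mem_relProdFiltration hq
  have hgk : ⁅g, k⁆ ∈ F (i + j) := hF.commutatorElement_mem hg hk le_rfl
  have huv : u * v ∈ L ⊓ F 1 := mul_mem (inf_le_inf_left L (hF.antitone (by omega)) hu)
    (inf_le_inf_left L (hF.antitone (by omega)) hv)
  have hvk : v * k ∈ F j := mul_mem (hF.antitone j.le_succ hv.2) hk
  rw [Prod.mk_commutatorElement_mk]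
  refine hF.mk_mem_relProdFiltration hgk ?_
  rw [commutatorElement_mul_mul_mul_inv]
  have hN : (L ⊓ F (i + j + 1)).Normal := inferInstance
  exact mul_mem (mul_mem (hN.conj_mem _ (hF.commutatorElement_mem_inf_right hg hv (by omega)) u)
    (hF.commutatorElement_mem_inf_left huv hgk (by omega)))
    (hN.conj_mem _ (hF.commutatorElement_mem_inf_left hu hvk (by omega)) _)

end IsCommutatorFiltration

end RelProdFiltration

section ExtendFiltration

variable {G : Type*} [Group G] {d : ℕ} {Gf : ℕ → Subgroup G}

def extendFiltration (d : ℕ) (Gf : ℕ → Subgroup G) (i : ℕ) : Subgroup G :=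
  Gf (max 1 (min i (d + 1)))

theorem extendFiltration_of_le {i : ℕ} (h1 : 1 ≤ i) (h2 : i ≤ d + 1) :
    extendFiltration d Gf i = Gf i :=
  congrArg Gf (by omega)

theorem extendFiltration_of_ge {i : ℕ} (h : d + 1 ≤ i) :
    extendFiltration d Gf i = Gf (d + 1) :=
  congrArg Gf (by omega)

theorem extendFiltration_normal (hGnorm : ∀ i, 1 ≤ i → i ≤ d + 1 → (Gf i).Normal) (i : ℕ) :
    (extendFiltration d Gf i).Normal :=
  hGnorm _ (le_max_left _ _) (by omega)

theorem antitone_extendFiltration (hGmono : ∀ i, 1 ≤ i → i ≤ d → Gf (i + 1) ≤ Gf i) :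
    Antitone (extendFiltration d Gf) := by
  refine antitone_nat_of_succ_le fun i => ?_
  by_cases hi : 1 ≤ i ∧ i ≤ d
  · rw [extendFiltration_of_le hi.1 (by omega), extendFiltration_of_le (by omega) (by omega)]
    exact hGmono i hi.1 hi.2
  · exact le_of_eq (congrArg Gf (by omega))

theorem isCommutatorFiltration_extendFiltration
    (hGmono : ∀ i, 1 ≤ i → i ≤ d → Gf (i + 1) ≤ Gf i)
    (hGnorm : ∀ i, 1 ≤ i → i ≤ d + 1 → (Gf i).Normal)
    (hGcomm : ∀ i j, 1 ≤ i → 1 ≤ j → i ≤ d → j ≤ d → i + j ≤ d + 1 →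
      ⁅Gf i, Gf j⁆ ≤ Gf (i + j)) :
    IsCommutatorFiltration (extendFiltration d Gf) := by
  have := extendFiltration_normal hGnorm
  have hanti := antitone_extendFiltration hGmono
  refine ⟨hanti, fun i j => ?_⟩
  rcases Nat.eq_zero_or_pos i with rfl | hi
  · simpa using commutator_le_right _ _
  rcases Nat.eq_zero_or_pos j with rfl | hj
  · simpa using commutator_le_left _ _
  have : (Gf (d + 1)).Normal := hGnorm (d + 1) (by omega) le_rfl
  by_cases hid : d + 1 ≤ i
  · rw [extendFiltration_of_ge hid, extendFiltration_of_ge (by omega : d + 1 ≤ i + j)]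
    exact commutator_le_left _ _
  by_cases hjd : d + 1 ≤ j
  · rw [extendFiltration_of_ge hjd, extendFiltration_of_ge (by omega : d + 1 ≤ i + j)]
    exact commutator_le_right _ _
  -- `s = i` if `i + j ≤ d + 1`; otherwise `s = d + 1 - j` and the target is `G_{d+1}`
  set s := min i (d + 1 - j)
  calc ⁅extendFiltration d Gf i, extendFiltration d Gf j⁆
      ≤ ⁅extendFiltration d Gf s, extendFiltration d Gf j⁆ :=
        commutator_mono (hanti (by omega)) le_rfl
    _ = ⁅Gf s, Gf j⁆ := by
        rw [extendFiltration_of_le (by omega) (by omega), extendFiltration_of_le hj (by omega)]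
    _ ≤ Gf (s + j) := hGcomm s j (by omega) hj (by omega) (by omega) (by omega)
    _ = extendFiltration d Gf (i + j) := congrArg Gf (by omega)

end ExtendFiltration

/-- **Lemma 4.2.** A `d`-step filtration `G_•` of `G` with `L ⊆ G₂` induces a `d`-step
filtration `H_•` of `G ×_L G` given by `H_i = G_i ×_{L_i} G_i` with `L_i = L ∩ G_{i+1}`
(for `1 ≤ i ≤ d`) and `H_{d+1} = {1}`. -/
theorem filtration_relProd {G : Type*} [Group G] (d : ℕ) (hd : 1 ≤ d)
    (Gf : ℕ → Subgroup G)
    (hG1 : Gf 1 = ⊤) (hGtriv : Gf (d + 1) = ⊥)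
    (hGmono : ∀ i, 1 ≤ i → i ≤ d → Gf (i + 1) ≤ Gf i)
    (hGnorm : ∀ i, 1 ≤ i → i ≤ d + 1 → (Gf i).Normal)
    (hGcomm : ∀ i j, 1 ≤ i → 1 ≤ j → i ≤ d → j ≤ d → i + j ≤ d + 1 →
      ⁅Gf i, Gf j⁆ ≤ Gf (i + j))
    (L : Subgroup G) [L.Normal] (hL : L ≤ Gf 2) :
    ∃ Hf : ℕ → Subgroup (G × G),
      (∀ i, 1 ≤ i → i ≤ d →
        (Hf i : Set (G × G)) =
          {p : G × G | p.1 ∈ Gf i ∧ p.2 ∈ Gf i ∧ p.1 * p.2⁻¹ ∈ L ⊓ Gf (i + 1)}) ∧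
      Hf 1 = relProd L ∧
      Hf (d + 1) = ⊥ ∧
      (∀ i, 1 ≤ i → i ≤ d → Hf (i + 1) ≤ Hf i) ∧
      (∀ i, 1 ≤ i → i ≤ d + 1 → ∀ h ∈ Hf i, ∀ g ∈ relProd L, g * h * g⁻¹ ∈ Hf i) ∧
      (∀ i j, 1 ≤ i → 1 ≤ j → i ≤ d → j ≤ d → i + j ≤ d + 1 →
        ⁅Hf i, Hf j⁆ ≤ Hf (i + j)) := by
  have := extendFiltration_normal hGnorm
  have hF := isCommutatorFiltration_extendFiltration hGmono hGnorm hGcomm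
  have hF_eq : ∀ i, 1 ≤ i → i ≤ d + 1 → extendFiltration d Gf i = Gf i :=
    fun _ => extendFiltration_of_le
  have hF1 : extendFiltration d Gf 1 = ⊤ := (hF_eq 1 le_rfl (by omega)).trans hG1
  refine ⟨relProdFiltration (extendFiltration d Gf) L, fun i hi hid => ?_,
    relProdFiltration_one hF1 ((hF_eq 2 (by omega) (by omega)).symm ▸ hL),
    relProdFiltration_eq_bot ((hF_eq (d + 1) (by omega) le_rfl).trans hGtriv),
    fun i _ _ => hF.relProdFiltration_antitone i.le_succ,
    fun i _ _ h hh g hg => hF.conj_mem_relProdFiltration (hF1 ▸ le_top) hg hh,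
    fun i j _ _ _ _ _ => hF.relProdFiltration_commutator_le i j⟩
  ext p
  simp only [SetLike.mem_coe, mem_relProdFiltration, hF_eq i hi (by omega),
    hF_eq (i + 1) (by omega) (by omega), Set.mem_ofPred_eq]
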